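/- arXiv:2408.15539 — 2 statements merged into one kernel-verified Lean document; each statement's English description precedes it below -/
import Mathlib

section
/- For every η > 0, the Laplace-type integral F(η) = ∫_0^{+∞} e^{-t} f(t^{-1/2} η) dt equals 1 - (1/2)e^{-η}, and for every η ≤ 0 it equals (1/2)e^{η}, where f(ξ) = (1/(2√π)) ∫_{-∞}^{ξ} e^{-s²/4} ds. -/
open Real Set

noncomputable def fGauss (ξ : ℝ) : ℝ :=
  (1 / (2 * Real.sqrt π)) * ∫ s in Set.Iic ξ, Real.exp (-s ^ 2 / 4)

noncomputable def FLap (η : ℝ) : ℝ :=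
  ∫ t in Set.Ioi (0 : ℝ), Real.exp (-t) * fGauss (η / Real.sqrt t)

/-! For `η < 0`, Fubini turns `F η` into `(2√π)⁻¹ ∫_{s<0} exp (-(η/s)² - s²/4) ds`. After
`s = -2x` this is `exp η` times the Cauchy–Schlömilch integral `∫_0^∞ exp (-(x - a/x)²) dx = √π/2`
with `a = -η/2`, which follows by averaging the substitutions `y = x - a/x` (onto `ℝ`) and `x ↦ a/x`
(which fixes the integrand). The symmetry `f ξ + f (-ξ) = 1` gives `F η + F (-η) = 1`, which settles
`η = 0` and transfers the formula to `η > 0`. -/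

open MeasureTheory

lemma integral_exp_neg_sq : ∫ x, exp (-x ^ 2) = √π := by
  simpa using integral_gaussian 1

lemma integrable_exp_neg_sq : Integrable fun x : ℝ => exp (-x ^ 2) := by
  simpa using integrable_exp_neg_mul_sq one_pos

lemma integrable_exp_neg_sq_div_four : Integrable fun s : ℝ => exp (-s ^ 2 / 4) := by
  simpa [neg_div, div_eq_inv_mul] using integrable_exp_neg_mul_sq (b := 1 / 4) (by norm_num)

lemma integral_exp_neg_sq_div_four : ∫ s, exp (-s ^ 2 / 4) = 2 * √π := by
  have := integral_gaussian (1 / 4)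
  rw [div_div_eq_mul_div, div_one, show π * 4 = π * 2 ^ 2 by norm_num, sqrt_mul pi_pos.le,
    sqrt_sq (by norm_num)] at this
  simpa [neg_div, div_eq_inv_mul, mul_comm] using this

section CauchySchlomilch

variable {a : ℝ}

lemma hasDerivAt_sub_div_self {x : ℝ} (hx : x ≠ 0) :
    HasDerivAt (fun x => x - a / x) (1 + a / x ^ 2) x := by
  refine ((hasDerivAt_id' x).sub ((hasDerivAt_inv hx).const_mul a)).congr_deriv ?_
  field_simp
  ring

lemma strictMonoOn_sub_div_self (ha : 0 < a) : StrictMonoOn (fun x => x - a / x) (Ioi 0) := by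
  intro x hx y _ hxy
  have : a / y < a / x := div_lt_div_of_pos_left ha hx hxy
  dsimp only
  linarith

lemma image_sub_div_self_Ioi (ha : 0 < a) : (fun x => x - a / x) '' Ioi 0 = univ := by
  refine eq_univ_of_forall fun y => ?_
  set w := √(y ^ 2 + 4 * a)
  have hw : w ^ 2 = y ^ 2 + 4 * a := sq_sqrt (by positivity)
  have hy : |y| < w := by
    rw [← sqrt_sq_eq_abs]; exact sqrt_lt_sqrt (sq_nonneg y) (by linarith)
  have hx : 0 < y + w := by linarith [neg_abs_le y]
  refine ⟨(y + w) / 2, half_pos hx, ?_⟩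
  field_simp
  linear_combination hw

lemma image_div_self_Ioi (ha : 0 < a) : (fun x => a / x) '' Ioi 0 = Ioi 0 := by
  refine Subset.antisymm (image_subset_iff.2 fun x hx => div_pos ha hx) fun y hy => ?_
  exact ⟨a / y, div_pos ha hy, div_div_cancel₀ ha.ne'⟩

theorem integral_exp_neg_sub_div_self_sq (ha : 0 < a) :
    ∫ x in Ioi 0, exp (-(x - a / x) ^ 2) = √π / 2 := by
  set h : ℝ → ℝ := fun x => exp (-(x - a / x) ^ 2)
  have hu : ∀ x ∈ Ioi (0 : ℝ),
      HasDerivWithinAt (fun x => x - a / x) (1 + a / x ^ 2) (Ioi 0) x :=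
    fun x hx => (hasDerivAt_sub_div_self (ne_of_gt hx)).hasDerivWithinAt
  have hv : ∀ x ∈ Ioi (0 : ℝ), HasDerivWithinAt (fun x => a / x) (-(a / x ^ 2)) (Ioi 0) x := by
    intro x hx
    refine (((hasDerivAt_inv (ne_of_gt hx)).const_mul a).congr_deriv ?_).hasDerivWithinAt
    ring
  have hu_inj := (strictMonoOn_sub_div_self ha).injOn
  have hv_inj : InjOn (fun x => a / x) (Ioi 0) := fun x _ y _ hxy => by
    simpa [div_div_cancel₀ ha.ne'] using congrArg (a / ·) hxy
  have hweight : ∀ x ∈ Ioi (0 : ℝ),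
      |1 + a / x ^ 2| • exp (-(x - a / x) ^ 2) = (1 + a / x ^ 2) * h x :=
    fun x _ => by rw [abs_of_pos (by positivity), smul_eq_mul]
  have hint_weighted : IntegrableOn (fun x => (1 + a / x ^ 2) * h x) (Ioi 0) := by
    refine ((integrableOn_image_iff_integrableOn_abs_deriv_smul measurableSet_Ioi hu hu_inj
      (fun y => exp (-y ^ 2))).1 ?_).congr_fun hweight measurableSet_Ioi
    rw [image_sub_div_self_Ioi ha, integrableOn_univ]
    exact integrable_exp_neg_sq
  have hweighted : ∫ x in Ioi 0, (1 + a / x ^ 2) * h x = √π := by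
    rw [← setIntegral_congr_fun measurableSet_Ioi hweight,
      ← integral_image_eq_integral_abs_deriv_smul measurableSet_Ioi hu hu_inj fun y => exp (-y ^ 2),
      image_sub_div_self_Ioi ha, setIntegral_univ, integral_exp_neg_sq]
  have hint : IntegrableOn h (Ioi 0) := by
    refine hint_weighted.mono' (by fun_prop) ((ae_restrict_iff' measurableSet_Ioi).2 ?_)
    refine Filter.Eventually.of_forall fun x (hx : 0 < x) => ?_
    rw [Real.norm_of_nonneg (exp_pos _).le]
    exact le_mul_of_one_le_left (exp_pos _).le (by simp; positivity)
  -- the inversion `x ↦ a / x` preserves `h` and has Jacobian `a / x ^ 2`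
  have hinversion : ∫ x in Ioi 0, h x = ∫ x in Ioi 0, a / x ^ 2 * h x := by
    conv_lhs => rw [← image_div_self_Ioi ha]
    rw [integral_image_eq_integral_abs_deriv_smul measurableSet_Ioi hv hv_inj]
    refine setIntegral_congr_fun measurableSet_Ioi fun x (hx : 0 < x) => ?_
    simp only [h, smul_eq_mul, abs_neg, abs_of_pos (by positivity : 0 < a / x ^ 2),
      div_div_cancel₀ ha.ne']
    ring_nf
  have hsplit : ∫ x in Ioi 0, a / x ^ 2 * h x =
      (∫ x in Ioi 0, (1 + a / x ^ 2) * h x) - ∫ x in Ioi 0, h x := by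
    rw [← integral_sub hint_weighted hint]
    simp only [add_mul, one_mul, add_sub_cancel_left]
  linarith

end CauchySchlomilch

lemma le_div_sqrt_iff_div_sq_le {η s t : ℝ} (hη : η ≤ 0) (hs : s < 0) (ht : 0 < t) :
    s ≤ η / √t ↔ (η / s) ^ 2 ≤ t := by
  rw [le_div_iff₀ (sqrt_pos.2 ht), ← le_sqrt (div_nonneg_of_nonpos hη hs.le) ht.le,
    div_le_iff_of_neg hs, mul_comm]

lemma integral_exp_neg_mul_setIntegral_Iic_div_sqrt {η : ℝ} (hη : η < 0) {g : ℝ → ℝ}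
    (hg : IntegrableOn g (Iio 0)) :
    ∫ t in Ioi 0, exp (-t) * ∫ s in Iic (η / √t), g s = ∫ s in Iio 0, exp (-(η / s) ^ 2) * g s := by
  set K : ℝ → ℝ → ℝ := fun t s =>
    {p : ℝ × ℝ | (η / p.2) ^ 2 ≤ p.1}.indicator (fun p => exp (-p.1) * g p.2) (t, s)
  have hK : Integrable (Function.uncurry K)
      ((volume.restrict (Ioi 0)).prod (volume.restrict (Iio 0))) :=
    ((integrableOn_exp_neg_Ioi 0).mul_prod hg).indicator
      (measurableSet_le (by fun_prop : Measurable fun p : ℝ × ℝ => (η / p.2) ^ 2) measurable_fst)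
  have hK_s : ∀ t ∈ Ioi (0 : ℝ), ∫ s in Iio 0, K t s = exp (-t) * ∫ s in Iic (η / √t), g s := by
    intro t (ht : 0 < t)
    have hcut : Iio 0 ∩ Iic (η / √t) = Iic (η / √t) :=
      inter_eq_right.2 (Iic_subset_Iio.2 (div_neg_of_neg_of_pos hη (sqrt_pos.2 ht)))
    rw [← integral_const_mul, ← hcut, ← setIntegral_indicator measurableSet_Iic]
    refine setIntegral_congr_fun measurableSet_Iio fun s (hs : s < 0) => ?_
    simp only [K, indicator_apply, mem_ofPred_eq, mem_Iic, le_div_sqrt_iff_div_sq_le hη.le hs ht]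
  have hK_t : ∀ s ∈ Iio (0 : ℝ), ∫ t in Ioi 0, K t s = exp (-(η / s) ^ 2) * g s := by
    intro s (hs : s < 0)
    have hcut : Ioi 0 ∩ Ici ((η / s) ^ 2) = Ici ((η / s) ^ 2) :=
      inter_eq_right.2 (Ici_subset_Ioi.2 (pow_pos (div_pos_of_neg_of_neg hη hs) 2))
    rw [← integral_exp_neg_Ioi, ← integral_Ici_eq_integral_Ioi (x := (η / s) ^ 2),
      ← integral_mul_const, ← hcut, ← setIntegral_indicator measurableSet_Ici]
    refine setIntegral_congr_fun measurableSet_Ioi fun t _ => ?_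
    simp only [K, indicator_apply, mem_ofPred_eq, mem_Ici]
  rw [← setIntegral_congr_fun measurableSet_Ioi hK_s, integral_integral_swap hK,
    setIntegral_congr_fun measurableSet_Iio hK_t]

lemma integral_Iio_exp_neg_div_sq_mul_exp_neg_sq_div_four {η : ℝ} (hη : η < 0) :
    ∫ s in Iio 0, exp (-(η / s) ^ 2) * exp (-s ^ 2 / 4) = √π * exp η := by
  set f : ℝ → ℝ := fun s => exp (-(η / s) ^ 2) * exp (-s ^ 2 / 4)
  have hscale := integral_comp_mul_left_Ioi' (fun x => f (-x)) 0 two_pos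
  rw [mul_zero] at hscale
  have hsubst : ∀ x ∈ Ioi (0 : ℝ), f (-(2 * x)) = exp (-(x - -η / 2 / x) ^ 2) * exp η := by
    intro x (hx : 0 < x)
    simp only [f, ← exp_add]
    congr 1
    field_simp
    ring
  rw [← integral_Iic_eq_integral_Iio, ← neg_zero, ← integral_comp_neg_Ioi, ← hscale,
    setIntegral_congr_fun measurableSet_Ioi hsubst, integral_mul_const,
    integral_exp_neg_sub_div_self_sq (by linarith), smul_eq_mul]
  ring

lemma fGauss_nonneg (ξ : ℝ) : 0 ≤ fGauss ξ :=
  mul_nonneg (by positivity) (setIntegral_nonneg measurableSet_Iic fun s _ => (exp_pos _).le)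

lemma fGauss_mono : Monotone fGauss := fun a b hab => by
  refine mul_le_mul_of_nonneg_left ?_ (by positivity)
  exact setIntegral_mono_set integrable_exp_neg_sq_div_four.integrableOn
    (.of_forall fun s => (exp_pos _).le) (Iic_subset_Iic.2 hab).eventuallyLE

lemma fGauss_add_fGauss_neg (ξ : ℝ) : fGauss ξ + fGauss (-ξ) = 1 := by
  have hreflect : ∫ s in Iic (-ξ), exp (-s ^ 2 / 4) = ∫ s in Ioi ξ, exp (-s ^ 2 / 4) := by
    simp [← integral_comp_neg_Ioi]
  rw [fGauss, fGauss, hreflect, ← mul_add, intervalIntegral.integral_Iic_add_Ioi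
    integrable_exp_neg_sq_div_four.integrableOn integrable_exp_neg_sq_div_four.integrableOn,
    integral_exp_neg_sq_div_four]
  field_simp

lemma fGauss_le_one (ξ : ℝ) : fGauss ξ ≤ 1 := by
  linarith [fGauss_add_fGauss_neg ξ, fGauss_nonneg (-ξ)]

lemma integrableOn_FLap_integrand (η : ℝ) :
    IntegrableOn (fun t => exp (-t) * fGauss (η / √t)) (Ioi 0) := by
  refine (integrableOn_exp_neg_Ioi 0).mono' ?_ (.of_forall fun t => ?_)
  · exact (measurable_exp.comp measurable_neg).aestronglyMeasurable.mul
      (fGauss_mono.measurable.comp (by fun_prop)).aestronglyMeasurable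
  · rw [norm_mul, Real.norm_of_nonneg (exp_pos _).le, Real.norm_of_nonneg (fGauss_nonneg _)]
    simpa using mul_le_of_le_one_right (exp_pos (-t)).le (fGauss_le_one (η / √t))

lemma FLap_add_FLap_neg (η : ℝ) : FLap η + FLap (-η) = 1 := by
  rw [FLap, FLap, ← integral_add (integrableOn_FLap_integrand η) (integrableOn_FLap_integrand (-η)),
    ← integral_exp_neg_Ioi_zero]
  refine setIntegral_congr_fun measurableSet_Ioi fun t _ => ?_
  rw [← mul_add, neg_div, fGauss_add_fGauss_neg, mul_one]

lemma FLap_of_neg {η : ℝ} (hη : η < 0) : FLap η = exp η / 2 := by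
  calc FLap η = 1 / (2 * √π) * ∫ t in Ioi 0, exp (-t) * ∫ s in Iic (η / √t), exp (-s ^ 2 / 4) := by
        rw [FLap, ← integral_const_mul]
        simp only [fGauss, mul_left_comm]
    _ = 1 / (2 * √π) * (√π * exp η) := by
        rw [integral_exp_neg_mul_setIntegral_Iic_div_sqrt hη
          integrable_exp_neg_sq_div_four.integrableOn,
          integral_Iio_exp_neg_div_sq_mul_exp_neg_sq_div_four hη]
    _ = exp η / 2 := by
        field_simp

theorem stmt_2 :
    (∀ η : ℝ, 0 < η → FLap η = 1 - (1 / 2) * Real.exp (-η)) ∧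
    (∀ η : ℝ, η ≤ 0 → FLap η = (1 / 2) * Real.exp η) := by
  have hnonpos : ∀ η : ℝ, η ≤ 0 → FLap η = 1 / 2 * exp η := by
    intro η hη
    rcases hη.lt_or_eq with hη | rfl
    · rw [FLap_of_neg hη]
      ring
    · have h0 := FLap_add_FLap_neg 0
      rw [neg_zero] at h0
      rw [exp_zero]
      linarith
  refine ⟨fun η hη => ?_, hnonpos⟩
  linarith [FLap_add_FLap_neg η, hnonpos (-η) (by linarith)]
end

section
/- Karamata's Tauberian theorem: let μ be a measure on [0, ∞) such that t ↦ e^{−λt} is μ-integrable for every λ > 0, and suppose for some α > 0 and A > 0 that λ^α ∫_0^∞ e^{−λt} dμ(t) → A as λ → +∞. Then t^{−α} μ([0,t]) → A/Γ(α+1) as t → 0⁺. -/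
/-!
Karamata's argument. After the substitution s = l t, the hypothesis says that the measures
l ^ α μ(· / l), tested against e^{-c s}, converge to (A / Γ(α)) s^{α-1} ds for every c > 0.
By linearity the same holds for p(e^{-s}) e^{-s} with p a polynomial, hence, by Weierstrass
approximation on [0, 1] (the error is controlled by the c = 1 case), for g(e^{-s}) e^{-s}
with g continuous. Writing g(x) = φ(-log x) / x, this covers every continuous φ vanishing on a
half-line [b, ∞). The indicator of [0, 1] is squeezed between two such piecewise linear ramps
whose integrals against s^{α-1} ds are within (1 ± d)^α / α of 1/α, so l ^ α μ[0, 1/l] tends to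
A / (α Γ(α)) = A / Γ(α + 1).
-/

open Real Filter MeasureTheory

open Set Topology Polynomial

noncomputable def ramp (a b s : ℝ) : ℝ := max 0 (min 1 ((b - s) / (b - a)))

section Ramp

variable {a b s : ℝ}

lemma continuous_ramp (a b : ℝ) : Continuous (ramp a b) := by
  unfold ramp; fun_prop

lemma ramp_nonneg (a b s : ℝ) : 0 ≤ ramp a b s := le_max_left _ _

lemma ramp_le_one (a b s : ℝ) : ramp a b s ≤ 1 := max_le zero_le_one (min_le_left _ _)

lemma ramp_eq_zero (hab : a < b) (hs : b ≤ s) : ramp a b s = 0 := by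
  have : (b - s) / (b - a) ≤ 0 := div_nonpos_of_nonpos_of_nonneg (by linarith) (by linarith)
  rw [ramp, min_eq_right (this.trans zero_le_one), max_eq_left this]

lemma ramp_eq_one (hab : a < b) (hs : s ≤ a) : ramp a b s = 1 := by
  have : 1 ≤ (b - s) / (b - a) := (one_le_div (by linarith)).2 (by linarith)
  rw [ramp, min_eq_left this, max_eq_right zero_le_one]

lemma mul_ramp_le_indicator {f : ℝ → ℝ} (hab : a < b) (hf : 0 ≤ f s) :
    f s * ramp a b s ≤ (Iic b).indicator f s := by
  by_cases hs : s ≤ b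
  · rw [indicator_of_mem (mem_Iic.2 hs)]
    exact mul_le_of_le_one_right hf (ramp_le_one a b s)
  · rw [indicator_of_notMem (mt mem_Iic.1 hs), ramp_eq_zero hab (not_le.1 hs).le, mul_zero]

lemma indicator_le_mul_ramp {f : ℝ → ℝ} (hab : a < b) (hf : 0 ≤ f s) :
    (Iic a).indicator f s ≤ f s * ramp a b s := by
  by_cases hs : s ≤ a
  · rw [indicator_of_mem (mem_Iic.2 hs), ramp_eq_one hab hs, mul_one]
  · rw [indicator_of_notMem (mt mem_Iic.1 hs)]
    exact mul_nonneg hf (ramp_nonneg a b s)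

end Ramp

lemma continuous_comp_neg_log_div {φ : ℝ → ℝ} {b : ℝ} (hφ : Continuous φ)
    (hφb : ∀ s, b ≤ s → φ s = 0) : Continuous fun x => φ (-log x) / x := by
  refine continuous_iff_continuousAt.2 fun x => ?_
  rcases eq_or_ne x 0 with rfl | hx
  · refine (continuousAt_const : ContinuousAt (fun _ : ℝ => (0 : ℝ)) 0).congr ?_
    have hlog := tendsto_log_nhdsNE_zero.eventually (eventually_le_atBot (-b))
    rw [eventually_nhdsWithin_iff] at hlog
    filter_upwards [hlog] with y hy
    rcases eq_or_ne y 0 with rfl | hy0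
    · simp
    · rw [hφb _ (by linarith [hy hy0]), zero_div]
  · exact (hφ.continuousAt.comp (continuousAt_log hx).neg).div continuousAt_id hx

lemma comp_neg_log_div_exp_neg_mul (φ : ℝ → ℝ) (s : ℝ) :
    φ (-log (exp (-s))) / exp (-s) * exp (-s) = φ s := by
  rw [log_exp, neg_neg, div_mul_cancel₀ _ (exp_ne_zero _)]

lemma exp_neg_mem_Icc {s : ℝ} (hs : 0 ≤ s) : exp (-s) ∈ Icc (0 : ℝ) 1 :=
  ⟨(exp_pos _).le, exp_le_one_iff.2 (neg_nonpos.2 hs)⟩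

lemma norm_comp_exp_neg_mul_exp_neg_le {g : ℝ → ℝ} {C s : ℝ}
    (hC : ∀ x ∈ Icc (0 : ℝ) 1, ‖g x‖ ≤ C) (hs : 0 ≤ s) :
    ‖g (exp (-s)) * exp (-s)‖ ≤ C * exp (-s) := by
  rw [norm_mul, norm_of_nonneg (exp_pos _).le]
  exact mul_le_mul_of_nonneg_right (hC _ (exp_neg_mem_Icc hs)) (exp_pos _).le

lemma eval_exp_neg_mul_exp_neg (p : ℝ[X]) (s : ℝ) :
    p.eval (exp (-s)) * exp (-s) =
      ∑ n ∈ Finset.range (p.natDegree + 1), p.coeff n * exp (-((n + 1) * s)) := by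
  rw [eval_eq_sum_range, Finset.sum_mul]
  refine Finset.sum_congr rfl fun n _ => ?_
  rw [mul_assoc, ← pow_succ, ← exp_nat_mul]
  push_cast
  ring_nf

lemma integrableOn_rpow_mul_exp_neg_mul {α c : ℝ} (hα : 0 < α) (hc : 0 < c) :
    IntegrableOn (fun t => t ^ (α - 1) * exp (-(c * t))) (Ioi 0) := by
  simpa [rpow_one, neg_mul] using
    integrableOn_rpow_mul_exp_neg_mul_rpow (by linarith : -1 < α - 1) one_pos hc

lemma integrableOn_rpow_mul_comp_exp_neg {α : ℝ} (hα : 0 < α) {g : ℝ → ℝ}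
    (hg : Continuous g) :
    IntegrableOn (fun t => t ^ (α - 1) * (g (exp (-t)) * exp (-t))) (Ioi 0) := by
  obtain ⟨C, hC⟩ := isCompact_Icc.exists_bound_of_continuousOn hg.continuousOn
  refine ((GammaIntegral_convergent hα).const_mul C).mono' (by fun_prop) ?_
  filter_upwards [ae_restrict_mem measurableSet_Ioi] with t (ht : 0 < t)
  have hw : 0 ≤ t ^ (α - 1) := rpow_nonneg ht.le _
  rw [norm_mul, norm_of_nonneg hw]
  calc t ^ (α - 1) * ‖g (exp (-t)) * exp (-t)‖ ≤ t ^ (α - 1) * (C * exp (-t)) :=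
        mul_le_mul_of_nonneg_left (norm_comp_exp_neg_mul_exp_neg_le hC ht.le) hw
    _ = C * (exp (-t) * t ^ (α - 1)) := by ring

lemma integrableOn_rpow_mul_of_continuous {α : ℝ} (hα : 0 < α) {φ : ℝ → ℝ} {b : ℝ}
    (hφ : Continuous φ) (hφb : ∀ s, b ≤ s → φ s = 0) :
    IntegrableOn (fun t => t ^ (α - 1) * φ t) (Ioi 0) := by
  simpa only [comp_neg_log_div_exp_neg_mul] using
    integrableOn_rpow_mul_comp_exp_neg hα (continuous_comp_neg_log_div hφ hφb)

lemma abs_setIntegral_rpow_mul_comp_exp_neg_sub_le {α : ℝ} (hα : 0 < α) {g h : ℝ → ℝ}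
    (hg : Continuous g) (hh : Continuous h) {e : ℝ} (hgh : ∀ x ∈ Icc (0 : ℝ) 1, |g x - h x| ≤ e) :
    |(∫ t in Ioi 0, t ^ (α - 1) * (g (exp (-t)) * exp (-t))) -
        ∫ t in Ioi 0, t ^ (α - 1) * (h (exp (-t)) * exp (-t))| ≤ e * Gamma α := by
  rw [← integral_sub (integrableOn_rpow_mul_comp_exp_neg hα hg)
    (integrableOn_rpow_mul_comp_exp_neg hα hh), Gamma_eq_integral hα,
    ← integral_const_mul, ← Real.norm_eq_abs]
  refine norm_integral_le_of_norm_le ((GammaIntegral_convergent hα).const_mul e) ?_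
  filter_upwards [ae_restrict_mem measurableSet_Ioi] with t (ht : 0 < t)
  have hw : 0 ≤ t ^ (α - 1) := rpow_nonneg ht.le _
  rw [← mul_sub, ← sub_mul, norm_mul, norm_of_nonneg hw]
  calc t ^ (α - 1) * ‖(g (exp (-t)) - h (exp (-t))) * exp (-t)‖
        ≤ t ^ (α - 1) * (e * exp (-t)) :=
        mul_le_mul_of_nonneg_left
          (norm_comp_exp_neg_mul_exp_neg_le (g := fun x => g x - h x) hgh ht.le) hw
    _ = e * (exp (-t) * t ^ (α - 1)) := by ring

lemma setIntegral_indicator_Iic_rpow {α c : ℝ} (hα : 0 < α) (hc : 0 ≤ c) :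
    ∫ t in Ioi 0, (Iic c).indicator (fun t => t ^ (α - 1)) t = c ^ α / α := by
  rw [setIntegral_indicator measurableSet_Iic, Ioi_inter_Iic, ← intervalIntegral.integral_of_le hc,
    integral_rpow (Or.inl (by linarith)), sub_add_cancel, zero_rpow hα.ne', sub_zero]

lemma integrableOn_indicator_Iic_rpow {α : ℝ} (hα : 0 < α) (c : ℝ) :
    IntegrableOn ((Iic c).indicator fun t => t ^ (α - 1)) (Ioi 0) := by
  rw [IntegrableOn, integrable_indicator_iff measurableSet_Iic, IntegrableOn,
    Measure.restrict_restrict measurableSet_Iic, inter_comm, Ioi_inter_Iic]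
  rcases le_or_gt c 0 with hc | hc
  · simp [Ioc_eq_empty (not_lt.2 hc)]
  · have := intervalIntegral.intervalIntegrable_rpow' (a := 0) (b := c) (by linarith : -1 < α - 1)
    rwa [intervalIntegrable_iff_integrableOn_Ioc_of_le hc.le] at this

lemma setIntegral_rpow_mul_ramp_le {α a b : ℝ} (hα : 0 < α) (hab : a < b) (hb : 0 ≤ b) :
    ∫ t in Ioi 0, t ^ (α - 1) * ramp a b t ≤ b ^ α / α := by
  rw [← setIntegral_indicator_Iic_rpow hα hb]
  refine setIntegral_mono_on
    (integrableOn_rpow_mul_of_continuous hα (continuous_ramp a b) fun _ => ramp_eq_zero hab)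
    (integrableOn_indicator_Iic_rpow hα b) measurableSet_Ioi fun t (ht : 0 < t) => ?_
  exact mul_ramp_le_indicator (f := fun t => t ^ (α - 1)) hab (rpow_nonneg ht.le _)

lemma le_setIntegral_rpow_mul_ramp {α a b : ℝ} (hα : 0 < α) (hab : a < b) (ha : 0 ≤ a) :
    a ^ α / α ≤ ∫ t in Ioi 0, t ^ (α - 1) * ramp a b t := by
  rw [← setIntegral_indicator_Iic_rpow hα ha]
  refine setIntegral_mono_on (integrableOn_indicator_Iic_rpow hα a)
    (integrableOn_rpow_mul_of_continuous hα (continuous_ramp a b) fun _ => ramp_eq_zero hab)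
    measurableSet_Ioi fun t (ht : 0 < t) => ?_
  exact indicator_le_mul_ramp (f := fun t => t ^ (α - 1)) hab (rpow_nonneg ht.le _)

lemma tendsto_mul_rpow_div_nhds_one (A α K : ℝ) :
    Tendsto (fun b : ℝ => A * b ^ α / K) (𝓝 1) (𝓝 (A / K)) := by
  simpa using (((continuousAt_rpow_const 1 α (Or.inl one_ne_zero)).const_mul A).div_const K).tendsto

section Laplace

variable {μ : Measure ℝ} {α A : ℝ}

lemma ae_nonneg_of_measure_Iio_eq_zero (hsupp : μ (Iio 0) = 0) : ∀ᵐ t ∂μ, 0 ≤ t :=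
  mem_ae_iff.2 (by rwa [← compl_Ici] at hsupp)

lemma measure_Iic_lt_top_of_integrable_exp_neg (hexp : Integrable (fun t => exp (-t)) μ) (x : ℝ) :
    μ (Iic x) < ⊤ :=
  (measure_mono fun _ (ht : _ ≤ x) => exp_le_exp.2 (neg_le_neg ht)).trans_lt
    (hexp.measure_ge_lt_top (exp_pos (-x)))

lemma integrable_comp_exp_neg_mul (hsupp : μ (Iio 0) = 0)
    (hexp : ∀ l, 0 < l → Integrable (fun t => exp (-(l * t))) μ)
    {g : ℝ → ℝ} (hg : Continuous g) {l : ℝ} (hl : 0 < l) :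
    Integrable (fun t => g (exp (-(l * t))) * exp (-(l * t))) μ := by
  obtain ⟨C, hC⟩ := isCompact_Icc.exists_bound_of_continuousOn hg.continuousOn
  refine ((hexp l hl).const_mul C).mono' (by fun_prop) ?_
  filter_upwards [ae_nonneg_of_measure_Iio_eq_zero hsupp] with t ht
  exact norm_comp_exp_neg_mul_exp_neg_le hC (by positivity)

lemma integrable_comp_mul_of_continuous (hsupp : μ (Iio 0) = 0)
    (hexp : ∀ l, 0 < l → Integrable (fun t => exp (-(l * t))) μ)
    {φ : ℝ → ℝ} {b : ℝ} (hφ : Continuous φ) (hφb : ∀ s, b ≤ s → φ s = 0) {l : ℝ} (hl : 0 < l) :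
    Integrable (fun t => φ (l * t)) μ := by
  simpa only [comp_neg_log_div_exp_neg_mul] using
    integrable_comp_exp_neg_mul hsupp hexp (continuous_comp_neg_log_div hφ hφb) hl

lemma abs_integral_comp_exp_neg_mul_sub_le (hsupp : μ (Iio 0) = 0)
    (hexp : ∀ l, 0 < l → Integrable (fun t => exp (-(l * t))) μ)
    {g h : ℝ → ℝ} (hg : Continuous g) (hh : Continuous h) {e : ℝ}
    (hgh : ∀ x ∈ Icc (0 : ℝ) 1, |g x - h x| ≤ e) {l : ℝ} (hl : 0 < l) :
    |(∫ t, g (exp (-(l * t))) * exp (-(l * t)) ∂μ) - ∫ t, h (exp (-(l * t))) * exp (-(l * t)) ∂μ|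
      ≤ e * ∫ t, exp (-(l * t)) ∂μ := by
  rw [← integral_sub (integrable_comp_exp_neg_mul hsupp hexp hg hl)
    (integrable_comp_exp_neg_mul hsupp hexp hh hl), ← integral_const_mul, ← Real.norm_eq_abs]
  refine norm_integral_le_of_norm_le ((hexp l hl).const_mul e) ?_
  filter_upwards [ae_nonneg_of_measure_Iio_eq_zero hsupp] with t ht
  rw [← sub_mul]
  exact norm_comp_exp_neg_mul_exp_neg_le (g := fun x => g x - h x) hgh (by positivity)

lemma tendsto_rpow_mul_integral_exp_neg_const_mul (hα : 0 < α)
    (hLap : Tendsto (fun l => l ^ α * ∫ t, exp (-(l * t)) ∂μ) atTop (𝓝 A)) {c : ℝ} (hc : 0 < c) :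
    Tendsto (fun l => l ^ α * ∫ t, exp (-(c * (l * t))) ∂μ) atTop
      (𝓝 (A / Gamma α * ∫ t in Ioi 0, t ^ (α - 1) * exp (-(c * t)))) := by
  have hlim : Tendsto (fun l => (1 / c) ^ α * ((c * l) ^ α * ∫ t, exp (-(c * l * t)) ∂μ)) atTop
      (𝓝 ((1 / c) ^ α * A)) :=
    (hLap.comp (tendsto_id.const_mul_atTop hc)).const_mul _
  rw [integral_rpow_mul_exp_neg_mul_Ioi hα hc,
    show A / Gamma α * ((1 / c) ^ α * Gamma α) = (1 / c) ^ α * A by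
      field_simp [(Gamma_pos_of_pos hα).ne']]
  refine hlim.congr' ?_
  filter_upwards [eventually_gt_atTop 0] with l hl
  have hc1 : (1 / c) ^ α * c ^ α = 1 := by
    rw [← mul_rpow (by positivity) hc.le, one_div_mul_cancel hc.ne', one_rpow]
  simp only [mul_rpow hc.le hl.le, mul_assoc]
  rw [← mul_assoc, hc1, one_mul]

lemma tendsto_rpow_mul_integral_polynomial (hα : 0 < α)
    (hexp : ∀ l, 0 < l → Integrable (fun t => exp (-(l * t))) μ)
    (hLap : Tendsto (fun l => l ^ α * ∫ t, exp (-(l * t)) ∂μ) atTop (𝓝 A)) (p : ℝ[X]) :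
    Tendsto (fun l => l ^ α * ∫ t, p.eval (exp (-(l * t))) * exp (-(l * t)) ∂μ) atTop
      (𝓝 (A / Gamma α * ∫ t in Ioi 0, t ^ (α - 1) * (p.eval (exp (-t)) * exp (-t)))) := by
  have hc (n : ℕ) : (0 : ℝ) < n + 1 := by positivity
  have hlim := tendsto_finsetSum (Finset.range (p.natDegree + 1)) fun n _ =>
    (tendsto_rpow_mul_integral_exp_neg_const_mul hα hLap (hc n)).const_mul (p.coeff n)
  have hval : A / Gamma α * ∫ t in Ioi 0, t ^ (α - 1) * (p.eval (exp (-t)) * exp (-t)) =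
      ∑ n ∈ Finset.range (p.natDegree + 1),
        p.coeff n * (A / Gamma α * ∫ t in Ioi 0, t ^ (α - 1) * exp (-((n + 1) * t))) := by
    simp_rw [eval_exp_neg_mul_exp_neg, Finset.mul_sum, mul_left_comm _ (p.coeff _)]
    rw [integral_finsetSum _ fun n _ =>
      (integrableOn_rpow_mul_exp_neg_mul hα (hc n)).const_mul _, Finset.mul_sum]
    refine Finset.sum_congr rfl fun n _ => ?_
    rw [integral_const_mul]
    ring
  rw [hval]
  refine hlim.congr' ?_
  filter_upwards [eventually_gt_atTop 0] with l hl
  simp_rw [eval_exp_neg_mul_exp_neg]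
  rw [integral_finsetSum _ fun n _ => by
    simpa only [mul_assoc] using (hexp _ (mul_pos (hc n) hl)).const_mul (p.coeff n), Finset.mul_sum]
  refine Finset.sum_congr rfl fun n _ => ?_
  rw [integral_const_mul]
  ring

theorem tendsto_rpow_mul_integral_comp_exp_neg (hsupp : μ (Iio 0) = 0) (hα : 0 < α)
    (hexp : ∀ l, 0 < l → Integrable (fun t => exp (-(l * t))) μ)
    (hLap : Tendsto (fun l => l ^ α * ∫ t, exp (-(l * t)) ∂μ) atTop (𝓝 A))
    {g : ℝ → ℝ} (hg : Continuous g) :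
    Tendsto (fun l => l ^ α * ∫ t, g (exp (-(l * t))) * exp (-(l * t)) ∂μ) atTop
      (𝓝 (A / Gamma α * ∫ t in Ioi 0, t ^ (α - 1) * (g (exp (-t)) * exp (-t)))) := by
  refine Metric.tendsto_nhds.2 fun ε hε => ?_
  -- the three errors below are at most e (|A| + 1), e and |A| e
  set e := ε / (2 * |A| + 2)
  have he : 0 < e := by positivity
  obtain ⟨p, hp⟩ := exists_polynomial_near_of_continuousOn 0 1 g hg.continuousOn e he
  have hgp : ∀ x ∈ Icc (0 : ℝ) 1, |g x - p.eval x| ≤ e := fun x hx => by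
    rw [abs_sub_comm]; exact (hp x hx).le
  set Φg := A / Gamma α * ∫ t in Ioi 0, t ^ (α - 1) * (g (exp (-t)) * exp (-t))
  set Φp := A / Gamma α * ∫ t in Ioi 0, t ^ (α - 1) * (p.eval (exp (-t)) * exp (-t))
  have hΓ := Gamma_pos_of_pos hα
  have hΦ : |Φp - Φg| ≤ |A| * e := by
    rw [abs_sub_comm, ← mul_sub, abs_mul, abs_div, abs_of_pos hΓ]
    calc |A| / Gamma α * |_ - _| ≤ |A| / Gamma α * (e * Gamma α) :=
          mul_le_mul_of_nonneg_left
            (abs_setIntegral_rpow_mul_comp_exp_neg_sub_le hα hg p.continuous hgp) (by positivity)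
      _ = |A| * e := by field_simp
  filter_upwards [eventually_gt_atTop 0,
    hLap.eventually (gt_mem_nhds (lt_add_of_le_of_pos (le_abs_self A) one_pos)),
    Metric.tendsto_nhds.1 (tendsto_rpow_mul_integral_polynomial hα hexp hLap p) e he]
    with l hl hE hpoly
  set Fg := l ^ α * ∫ t, g (exp (-(l * t))) * exp (-(l * t)) ∂μ
  set Fp := l ^ α * ∫ t, p.eval (exp (-(l * t))) * exp (-(l * t)) ∂μ
  rw [dist_eq] at hpoly ⊢
  have hF : |Fg - Fp| ≤ e * (l ^ α * ∫ t, exp (-(l * t)) ∂μ) := by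
    rw [← mul_sub, abs_mul, abs_of_nonneg (rpow_nonneg hl.le α), mul_left_comm]
    exact mul_le_mul_of_nonneg_left
      (abs_integral_comp_exp_neg_mul_sub_le hsupp hexp hg p.continuous hgp hl) (rpow_nonneg hl.le α)
  have hE' : e * (l ^ α * ∫ t, exp (-(l * t)) ∂μ) < e * (|A| + 1) := mul_lt_mul_of_pos_left hE he
  have he_eq : e * (|A| + 1) + e + |A| * e = ε := by
    rw [show e * (|A| + 1) + e + |A| * e = e * (2 * |A| + 2) by ring]
    exact div_mul_cancel₀ _ (by positivity)
  linarith [abs_sub_le Fg Fp Φg, abs_sub_le Fp Φp Φg]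

theorem tendsto_rpow_mul_integral_comp_mul (hsupp : μ (Iio 0) = 0) (hα : 0 < α)
    (hexp : ∀ l, 0 < l → Integrable (fun t => exp (-(l * t))) μ)
    (hLap : Tendsto (fun l => l ^ α * ∫ t, exp (-(l * t)) ∂μ) atTop (𝓝 A))
    {φ : ℝ → ℝ} {b : ℝ} (hφ : Continuous φ) (hφb : ∀ s, b ≤ s → φ s = 0) :
    Tendsto (fun l => l ^ α * ∫ t, φ (l * t) ∂μ) atTop
      (𝓝 (A / Gamma α * ∫ t in Ioi 0, t ^ (α - 1) * φ t)) := by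
  simpa only [comp_neg_log_div_exp_neg_mul] using tendsto_rpow_mul_integral_comp_exp_neg hsupp hα
    hexp hLap (continuous_comp_neg_log_div hφ hφb)

lemma indicator_Icc_zero_inv_eq {l : ℝ} (hl : 0 < l) {t : ℝ} (ht : 0 ≤ t) :
    (Icc 0 l⁻¹).indicator (1 : ℝ → ℝ) t = (Iic 1).indicator 1 (l * t) := by
  have : t ≤ l⁻¹ ↔ l * t ≤ 1 := by rw [← le_inv_mul_iff₀ hl, mul_one]
  simp [indicator, ht, this]

lemma measureReal_Icc_zero_inv_le_integral_ramp (hsupp : μ (Iio 0) = 0)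
    (hexp : ∀ l, 0 < l → Integrable (fun t => exp (-(l * t))) μ) {l : ℝ} (hl : 0 < l) {b : ℝ}
    (hb : 1 < b) : μ.real (Icc 0 l⁻¹) ≤ ∫ t, ramp 1 b (l * t) ∂μ := by
  rw [← integral_indicator_one measurableSet_Icc]
  refine integral_mono_of_nonneg (Eventually.of_forall fun t => indicator_nonneg (by simp) t)
    (integrable_comp_mul_of_continuous hsupp hexp (continuous_ramp 1 b)
      (fun _ => ramp_eq_zero hb) hl) ?_
  filter_upwards [ae_nonneg_of_measure_Iio_eq_zero hsupp] with t ht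
  simpa [indicator_Icc_zero_inv_eq hl ht] using
    indicator_le_mul_ramp (f := 1) (s := l * t) hb zero_le_one

lemma integral_ramp_le_measureReal_Icc_zero_inv (hsupp : μ (Iio 0) = 0)
    (hexp : ∀ l, 0 < l → Integrable (fun t => exp (-(l * t))) μ) {l : ℝ} (hl : 0 < l) {a : ℝ}
    (ha : a < 1) : ∫ t, ramp a 1 (l * t) ∂μ ≤ μ.real (Icc 0 l⁻¹) := by
  have hfin : μ (Icc 0 l⁻¹) ≠ ⊤ := (measure_mono Icc_subset_Iic_self).trans_lt
    (measure_Iic_lt_top_of_integrable_exp_neg (by simpa using hexp 1 one_pos) _) |>.ne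
  rw [← integral_indicator_one measurableSet_Icc]
  refine integral_mono_of_nonneg (Eventually.of_forall fun t => ramp_nonneg a 1 _)
    ((integrable_indicator_iff measurableSet_Icc).2 (integrableOn_const hfin)) ?_
  filter_upwards [ae_nonneg_of_measure_Iio_eq_zero hsupp] with t ht
  simpa [indicator_Icc_zero_inv_eq hl ht] using
    mul_ramp_le_indicator (f := 1) (s := l * t) ha zero_le_one

lemma eventually_rpow_mul_measureReal_lt (hsupp : μ (Iio 0) = 0) (hα : 0 < α)
    (hexp : ∀ l, 0 < l → Integrable (fun t => exp (-(l * t))) μ)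
    (hLap : Tendsto (fun l => l ^ α * ∫ t, exp (-(l * t)) ∂μ) atTop (𝓝 A)) (hA : 0 ≤ A)
    {c : ℝ} (hc : A / Gamma (α + 1) < c) :
    ∀ᶠ l in atTop, l ^ α * μ.real (Icc 0 l⁻¹) < c := by
  have hnear : ∀ᶠ b in 𝓝[>] 1, A * b ^ α / Gamma (α + 1) < c ∧ 1 < b :=
    (((tendsto_mul_rpow_div_nhds_one A α _).eventually (gt_mem_nhds hc)).filter_mono
      nhdsWithin_le_nhds).and self_mem_nhdsWithin
  obtain ⟨b, hbc, hb⟩ := hnear.exists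
  have hbound : A / Gamma α * ∫ t in Ioi 0, t ^ (α - 1) * ramp 1 b t < c :=
    calc A / Gamma α * ∫ t in Ioi 0, t ^ (α - 1) * ramp 1 b t
        ≤ A / Gamma α * (b ^ α / α) :=
          mul_le_mul_of_nonneg_left (setIntegral_rpow_mul_ramp_le hα hb (by linarith))
            (div_nonneg hA (Gamma_pos_of_pos hα).le)
      _ = A * b ^ α / Gamma (α + 1) := by rw [Gamma_add_one hα.ne']; field_simp
      _ < c := hbc
  filter_upwards [(tendsto_rpow_mul_integral_comp_mul hsupp hα hexp hLap (continuous_ramp 1 b)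
    fun _ => ramp_eq_zero hb).eventually (gt_mem_nhds hbound), eventually_gt_atTop 0] with l hlt hl
  exact (mul_le_mul_of_nonneg_left (measureReal_Icc_zero_inv_le_integral_ramp hsupp hexp hl hb)
    (rpow_nonneg hl.le α)).trans_lt hlt

lemma eventually_lt_rpow_mul_measureReal (hsupp : μ (Iio 0) = 0) (hα : 0 < α)
    (hexp : ∀ l, 0 < l → Integrable (fun t => exp (-(l * t))) μ)
    (hLap : Tendsto (fun l => l ^ α * ∫ t, exp (-(l * t)) ∂μ) atTop (𝓝 A)) (hA : 0 ≤ A)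
    {c : ℝ} (hc : c < A / Gamma (α + 1)) :
    ∀ᶠ l in atTop, c < l ^ α * μ.real (Icc 0 l⁻¹) := by
  have hnear : ∀ᶠ a in 𝓝[<] 1, c < A * a ^ α / Gamma (α + 1) ∧ a ∈ Ioo 0 1 :=
    (((tendsto_mul_rpow_div_nhds_one A α _).eventually (lt_mem_nhds hc)).filter_mono
      nhdsWithin_le_nhds).and (Ioo_mem_nhdsLT one_pos)
  obtain ⟨a, hca, ha⟩ := hnear.exists
  have hbound : c < A / Gamma α * ∫ t in Ioi 0, t ^ (α - 1) * ramp a 1 t :=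
    calc c < A * a ^ α / Gamma (α + 1) := hca
      _ = A / Gamma α * (a ^ α / α) := by rw [Gamma_add_one hα.ne']; field_simp
      _ ≤ A / Gamma α * ∫ t in Ioi 0, t ^ (α - 1) * ramp a 1 t :=
          mul_le_mul_of_nonneg_left (le_setIntegral_rpow_mul_ramp hα ha.2 ha.1.le)
            (div_nonneg hA (Gamma_pos_of_pos hα).le)
  filter_upwards [(tendsto_rpow_mul_integral_comp_mul hsupp hα hexp hLap (continuous_ramp a 1)
    fun _ => ramp_eq_zero ha.2).eventually (lt_mem_nhds hbound), eventually_gt_atTop 0]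
    with l hlt hl
  exact hlt.trans_le (mul_le_mul_of_nonneg_left
    (integral_ramp_le_measureReal_Icc_zero_inv hsupp hexp hl ha.2) (rpow_nonneg hl.le α))

end Laplace

theorem stmt_15_general (μ : Measure ℝ) (hsupp : μ (Set.Iio 0) = 0)
    (hint : ∀ lam : ℝ, 0 < lam → Integrable (fun t => Real.exp (-lam * t)) μ)
    (α A : ℝ) (hα : 0 < α)
    (hLap : Tendsto (fun lam : ℝ => lam ^ α * ∫ t, Real.exp (-lam * t) ∂μ)
      atTop (nhds A)) :
    Tendsto (fun t : ℝ => t ^ (-α) * (μ (Set.Icc 0 t)).toReal)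
      (nhdsWithin 0 (Set.Ioi 0)) (nhds (A / Real.Gamma (α + 1))) := by
  simp only [neg_mul] at hint hLap
  have hA : 0 ≤ A := ge_of_tendsto hLap <| (eventually_gt_atTop 0).mono fun l hl =>
    mul_nonneg (rpow_nonneg hl.le α) (integral_nonneg fun t => (exp_pos _).le)
  have hlim : Tendsto (fun l => l ^ α * μ.real (Icc 0 l⁻¹)) atTop (𝓝 (A / Gamma (α + 1))) :=
    tendsto_order.2 ⟨fun c hc => eventually_lt_rpow_mul_measureReal hsupp hα hint hLap hA hc,
      fun c hc => eventually_rpow_mul_measureReal_lt hsupp hα hint hLap hA hc⟩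
  refine (hlim.comp tendsto_inv_nhdsGT_zero).congr' ?_
  filter_upwards [self_mem_nhdsWithin] with t (ht : 0 < t)
  simp [inv_inv, rpow_neg ht.le, inv_rpow ht.le, measureReal_def]

theorem stmt_15 (μ : Measure ℝ) (hsupp : μ (Set.Iio 0) = 0)
    (hint : ∀ lam : ℝ, 0 < lam → Integrable (fun t => Real.exp (-lam * t)) μ)
    (α A : ℝ) (hα : 0 < α) (hA : 0 < A)
    (hLap : Tendsto (fun lam : ℝ => lam ^ α * ∫ t, Real.exp (-lam * t) ∂μ)
      atTop (nhds A)) :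
    Tendsto (fun t : ℝ => t ^ (-α) * (μ (Set.Icc 0 t)).toReal)
      (nhdsWithin 0 (Set.Ioi 0)) (nhds (A / Real.Gamma (α + 1))) :=
  stmt_15_general μ hsupp hint α A hα hLap
end
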